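/- Let E and F be real Banach spaces, G and H Lie groups modelled on E and F, α ∈ (1/2, 1], and f : G → H a group homomorphism which is α-Hölder on a chart neighbourhood of the identity (with charts φ of G at 1 and ψ of H at 1). Let γ : ℝ → G be a smooth curve with γ(0) = 1 such that the curve t ↦ φ(γ(t)) has derivative 0 at t = 0. Then (ψ(f(γ(t))) − ψ(1_H))/t converges to 0 in F as t → 0. -/

import Mathlib

open scoped Manifold Topology
open Asymptotics Filter

/-! Put `g = φ ∘ γ`. As `γ` is smooth with `γ 0 = 1`, `g` is `C²` near `0` with `g'(0) = 0`, so
`g' = O(t)` and the mean value theorem gives `g t − g 0 = O(t²)`. Since `f 1 = 1`, the Hölder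
bound turns this into `ψ(f(γ t)) − ψ(1) = O(|t|^{2α})`, which is `o(t)` because `2α > 1`: the
curve `t ↦ ψ(f(γ t))` has derivative `0` at `0`. -/

theorem ContMDiffAt.contDiffAt_chartAt_comp {𝕜 : Type*} [NontriviallyNormedField 𝕜]
    {E' : Type*} [NormedAddCommGroup E'] [NormedSpace 𝕜 E']
    {E : Type*} [NormedAddCommGroup E] [NormedSpace 𝕜 E]
    {M : Type*} [TopologicalSpace M] [ChartedSpace E M] {n : WithTop ℕ∞}
    {γ : E' → M} {x : E'} (hγ : ContMDiffAt 𝓘(𝕜, E') 𝓘(𝕜, E) n γ x) :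
    ContDiffAt 𝕜 n (fun y => chartAt E (γ x) (γ y)) x := by
  rw [contMDiffAt_iff_target, contMDiffAt_iff_contDiffAt] at hγ
  simpa [Function.comp_def] using hγ.2

section
variable {E : Type*} [NormedAddCommGroup E] [NormedSpace ℝ E]

theorem isBigO_sub_pow_succ_of_hasDerivAt {f f' : ℝ → E} {x₀ : ℝ} {n : ℕ}
    (hff' : ∀ᶠ x in 𝓝 x₀, HasDerivAt f (f' x) x) (hf' : f' =O[𝓝 x₀] fun x => (x - x₀) ^ n) :
    (fun x => f x - f x₀) =O[𝓝 x₀] fun x => (x - x₀) ^ (n + 1) := by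
  obtain ⟨c, hc0, hc⟩ := hf'.exists_pos
  obtain ⟨ε, hε, hball⟩ := Metric.eventually_nhds_iff_ball.1 (hff'.and hc.bound)
  refine .of_bound c ?_
  filter_upwards [Metric.ball_mem_nhds x₀ hε] with x hx
  have hseg : Set.uIcc x₀ x ⊆ Metric.ball x₀ ε :=
    (convex_ball x₀ ε).ordConnected.uIcc_subset (Metric.mem_ball_self hε) hx
  have hmv := (convex_uIcc x₀ x).norm_image_sub_le_of_norm_hasDerivWithin_le
    (C := c * ‖(x - x₀) ^ n‖)
    (fun y hy => (hball y (hseg hy)).1.hasDerivWithinAt)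
    (fun y hy => (hball y (hseg hy)).2.trans <| by
      simp only [norm_pow, Real.norm_eq_abs]
      exact mul_le_mul_of_nonneg_left
        (pow_le_pow_left₀ (abs_nonneg _) (Set.abs_sub_left_of_mem_uIcc hy) n) hc0.le)
    Set.left_mem_uIcc Set.right_mem_uIcc
  rwa [pow_succ, norm_mul, ← mul_assoc]

theorem ContDiffAt.isBigO_sub_sq_of_hasDerivAt_zero {f : ℝ → E} {x₀ : ℝ}
    (hf : ContDiffAt ℝ 2 f x₀) (hf₀ : HasDerivAt f 0 x₀) :
    (fun x => f x - f x₀) =O[𝓝 x₀] fun x => (x - x₀) ^ 2 := by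
  have hf' : HasDerivAt (deriv f) (deriv (deriv f) x₀) x₀ :=
    ((hf.derivWithin (m := 1) (by norm_num)).differentiableAt one_ne_zero).hasDerivAt
  refine isBigO_sub_pow_succ_of_hasDerivAt (f' := deriv f) (n := 1) ?_ ?_
  · filter_upwards [hf.eventually (by simp)] with x hx
    exact (hx.differentiableAt (by norm_num)).hasDerivAt
  · simpa [hf₀.deriv] using hf'.isBigO_sub

end

theorem Asymptotics.IsBigO.of_norm_le_mul_rpow {ι E F G : Type*}
    [SeminormedAddCommGroup E] [SeminormedAddCommGroup F] [SeminormedAddCommGroup G]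
    {l : Filter ι} {u : ι → F} {v : ι → E} {w : ι → G} {C α : ℝ}
    (hα : 0 ≤ α) (huv : ∀ᶠ i in l, ‖u i‖ ≤ C * ‖v i‖ ^ α) (hvw : v =O[l] w) :
    u =O[l] fun i => ‖w i‖ ^ α :=
  (IsBigO.of_bound C (huv.mono fun i hi => by rwa [Real.norm_of_nonneg (by positivity)])).trans
    (hvw.norm_norm.rpow hα (Eventually.of_forall fun _ => norm_nonneg _))

theorem isLittleO_norm_rpow_id {E : Type*} [SeminormedAddCommGroup E] {p : ℝ} (hp : 1 < p) :
    (fun x : E => ‖x‖ ^ p) =o[𝓝 0] fun x => x := by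
  have h0 : Tendsto (fun x : E => ‖x‖ ^ (p - 1)) (𝓝 0) (𝓝 0) := by
    simpa [Real.zero_rpow (sub_pos.2 hp).ne'] using
      (tendsto_norm_zero (E := E)).rpow_const (p := p - 1) (Or.inr (sub_pos.2 hp).le)
  have h := ((isLittleO_one_iff ℝ).2 h0).mul_isBigO (isBigO_refl (fun x : E => ‖x‖) (𝓝 0))
  refine (h.congr' ?_ (by simp)).trans_isBigO (isBigO_norm_left.2 (isBigO_refl _ _))
  filter_upwards with x
  rw [← Real.rpow_add_one' (norm_nonneg x) (by linarith), sub_add_cancel]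

theorem difference_quotient_tendsto_zero_of_deriv_zero_general
    {E : Type*} [NormedAddCommGroup E] [NormedSpace ℝ E]
    {F : Type*} [NormedAddCommGroup F] [NormedSpace ℝ F]
    {G : Type*} [TopologicalSpace G] [ChartedSpace E G] [Group G]
    {H : Type*} [TopologicalSpace H] [ChartedSpace F H] [Group H]
    {α : ℝ} (hα : α ∈ Set.Ioc (1 / 2 : ℝ) 1)
    (f : G →* H)
    (hf : ∃ W : Set G, IsOpen W ∧ (1 : G) ∈ W ∧ W ⊆ (chartAt E (1 : G)).source ∧
      f '' W ⊆ (chartAt F (1 : H)).source ∧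
      ∃ C ≥ (0 : ℝ), ∀ x ∈ W, ∀ y ∈ W,
        ‖chartAt F (1 : H) (f x) - chartAt F (1 : H) (f y)‖
          ≤ C * ‖chartAt E (1 : G) x - chartAt E (1 : G) y‖ ^ α)
    (γ : ℝ → G) (hγ : ContMDiff 𝓘(ℝ, ℝ) 𝓘(ℝ, E) (⊤ : ℕ∞) γ) (hγ0 : γ 0 = 1)
    (hγ' : HasDerivAt (fun t : ℝ => chartAt E (1 : G) (γ t)) 0 0) :
    Filter.Tendsto
      (fun t : ℝ => t⁻¹ • (chartAt F (1 : H) (f (γ t)) - chartAt F (1 : H) (1 : H)))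
      (𝓝[≠] 0) (𝓝 0) := by
  obtain ⟨W, hW, hW1, -, -, C, -, hC⟩ := hf
  set g : ℝ → E := fun t => chartAt E (1 : G) (γ t)
  set h : ℝ → F := fun t => chartAt F (1 : H) (f (γ t))
  have hg : ContDiffAt ℝ 2 g 0 := by
    simpa [hγ0] using ((hγ 0).contDiffAt_chartAt_comp).of_le (by norm_cast)
  have hquad : (fun t => g t - g 0) =O[𝓝 0] fun t => t ^ 2 := by
    simpa using hg.isBigO_sub_sq_of_hasDerivAt_zero hγ'
  have hholder : ∀ᶠ t in 𝓝 0, ‖h t - h 0‖ ≤ C * ‖g t - g 0‖ ^ α := by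
    filter_upwards [hγ.continuous.continuousAt.preimage_mem_nhds
      (hW.mem_nhds (hγ0 ▸ hW1))] with t ht
    simpa [h, g, hγ0] using hC (γ t) ht 1 hW1
  have hsq : (fun t : ℝ => ‖t ^ 2‖ ^ α) = fun t => ‖t‖ ^ (2 * α) := by
    ext t
    rw [norm_pow, ← Real.rpow_natCast_mul (norm_nonneg t)]
    norm_num
  have hsmall : (fun t => h t - h 0) =o[𝓝 0] fun t => t := by
    exact (IsBigO.of_norm_le_mul_rpow (by linarith [hα.1]) hholder hquad).trans_isLittleO
      (hsq ▸ isLittleO_norm_rpow_id (by linarith [hα.1]))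
  have hderiv : HasDerivAt h 0 0 := hasDerivAt_iff_isLittleO_nhds_zero.2 (by simpa using hsmall)
  simpa [h, hγ0] using hderiv.tendsto_slope_zero

/-- For an `α`-Hölder homomorphism (`α ∈ (1/2, 1]`) between Banach Lie groups and a
smooth curve `γ` through the identity whose chart representative has vanishing
derivative at `0`, the difference quotient `(ψ(f(γ t)) − ψ(1))/t` tends to `0`. -/
theorem difference_quotient_tendsto_zero_of_deriv_zero
    {E : Type*} [NormedAddCommGroup E] [NormedSpace ℝ E] [CompleteSpace E]
    {F : Type*} [NormedAddCommGroup F] [NormedSpace ℝ F] [CompleteSpace F]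
    {G : Type*} [TopologicalSpace G] [ChartedSpace E G] [Group G] [LieGroup 𝓘(ℝ, E) (⊤ : ℕ∞) G]
    {H : Type*} [TopologicalSpace H] [ChartedSpace F H] [Group H] [LieGroup 𝓘(ℝ, F) (⊤ : ℕ∞) H]
    {α : ℝ} (hα : α ∈ Set.Ioc (1 / 2 : ℝ) 1)
    (f : G →* H)
    (hf : ∃ W : Set G, IsOpen W ∧ (1 : G) ∈ W ∧ W ⊆ (chartAt E (1 : G)).source ∧
      f '' W ⊆ (chartAt F (1 : H)).source ∧
      ∃ C ≥ (0 : ℝ), ∀ x ∈ W, ∀ y ∈ W,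
        ‖chartAt F (1 : H) (f x) - chartAt F (1 : H) (f y)‖
          ≤ C * ‖chartAt E (1 : G) x - chartAt E (1 : G) y‖ ^ α)
    (γ : ℝ → G) (hγ : ContMDiff 𝓘(ℝ, ℝ) 𝓘(ℝ, E) (⊤ : ℕ∞) γ) (hγ0 : γ 0 = 1)
    (hγ' : HasDerivAt (fun t : ℝ => chartAt E (1 : G) (γ t)) 0 0) :
    Filter.Tendsto
      (fun t : ℝ => t⁻¹ • (chartAt F (1 : H) (f (γ t)) - chartAt F (1 : H) (1 : H)))
      (𝓝[≠] 0) (𝓝 0) :=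
  difference_quotient_tendsto_zero_of_deriv_zero_general hα f hf γ hγ hγ0 hγ'
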